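/- Let A be an ℕ-graded ring and P a finitely generated ℤ-graded projective right A-module with filtration F^λP (the submodule generated by homogeneous elements of degree ≤ λ). Then for each k, the quotient F^{k+1}P/F^kP is isomorphic as a graded A-module to T(P)_{k+1} ⊗_{A₀} A(−(k+1)), and this isomorphism is natural in P (independent of the choice of A₀-linear section of P → T(P)). -/

import Mathlib

universe u

/-- The submodule `P·A₊` (for left modules: `A₊·P`), `A₊ = ⊕_{n>0} A_n`. -/
def posSMulSubmodule {A : Type u} [Ring A] (𝒜 : ℤ → AddSubgroup A)
    (P : Type u) [AddCommGroup P] [Module A P] : Submodule A P :=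
  Submodule.span A {x : P | ∃ n : ℤ, 0 < n ∧ ∃ a ∈ 𝒜 n, ∃ p : P, x = a • p}

/-- The degree-`κ` component of `T(P) = P/P·A₊` as an `A₀`-module (the image of `P_κ`). -/
def TSub {A : Type u} [Ring A] (𝒜 : ℤ → AddSubgroup A) (A₀ : Subring A)
    (P : Type u) [AddCommGroup P] [Module A P] (ℳ : ℤ → AddSubgroup P) (κ : ℤ) :
    Submodule A₀ (P ⧸ posSMulSubmodule 𝒜 P) :=
  Submodule.span A₀ ((Submodule.Quotient.mk : P → P ⧸ posSMulSubmodule 𝒜 P) '' (ℳ κ : Set P))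

/-- `F^λ P`: the `A`-submodule generated by homogeneous elements of degree at most `λ`. -/
def filtration {A : Type u} [Ring A] (P : Type u) [AddCommGroup P] [Module A P]
    (ℳ : ℤ → AddSubgroup P) (lam : ℤ) : Submodule A P :=
  Submodule.span A {x : P | ∃ ω ≤ lam, x ∈ ℳ ω}

/-!
A graded `A₀`-linear section `g` of `P → T(P)` induces `⨁ κ, T(P)_κ ⊗_{A₀} A(-κ) → P`. It is
surjective by graded Nakayama (`P` is finitely generated, hence bounded below in degree). It is
injective because its kernel `K` is a direct summand (`P` is projective) that vanishes under `T`,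
so `K = K·A₊` lies in arbitrarily high degree. Projecting onto the summand `κ = k + 1` retracts
`P/F^kP` onto `T(P)_{k+1} ⊗ A(-k-1)`, which gives injectivity; the image is `F^{k+1}P/F^kP`
since `P_{k+1} ∩ P·A₊ ⊆ F^kP`, and the same inclusion shows that two sections induce the same map.
-/

noncomputable section

open DirectSum

namespace GradedFiltration

theorem eq_zero_of_mem_of_neg {A : Type u} [Ring A] {𝒜 : ℤ → AddSubgroup A}
    (hsupp : ∀ n : ℤ, n < 0 → 𝒜 n = ⊥) {a : A} {i : ℤ} (ha : a ∈ 𝒜 i) (hi : i < 0) : a = 0 := by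
  rwa [hsupp i hi, AddSubgroup.mem_bot] at ha

section GradedModule

variable {A : Type u} [Ring A] (𝒜 : ℤ → AddSubgroup A)
  {M : Type u} [AddCommGroup M] [Module A M] (ℳ : ℤ → AddSubgroup M)
  [Decomposition ℳ] [SetLike.GradedSMul 𝒜 ℳ]

theorem coe_decompose_smul_of_left_mem {a : A} {i : ℤ} (ha : a ∈ 𝒜 i) (x : M) (d : ℤ) :
    (decompose ℳ (a • x) d : M) = a • decompose ℳ x (d - i) := by
  induction x using Decomposition.inductionOn ℳ with
  | zero => simp
  | add x y hx hy =>
    simp only [smul_add, decompose_add, DirectSum.add_apply, AddMemClass.coe_add, hx, hy]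
  | @homogeneous j x =>
    have hax : a • (x : M) ∈ ℳ (i + j) := SetLike.GradedSMul.smul_mem ha x.2
    by_cases hd : d = i + j
    · subst hd
      rw [decompose_of_mem_same ℳ hax, add_sub_cancel_left, decompose_coe, of_eq_same]
    · rw [decompose_of_mem_ne ℳ hax (Ne.symm hd), decompose_of_mem_ne ℳ x.2 (by omega),
        smul_zero]

variable [GradedRing 𝒜] {𝒜}

def componentwise (hsupp : ∀ n : ℤ, n < 0 → 𝒜 n = ⊥) (W : ℤ → Submodule A M)
    (hW : Monotone W) : Submodule A M where
  carrier := {x | ∀ d, (decompose ℳ x d : M) ∈ W d}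
  zero_mem' d := by simp
  add_mem' {x y} hx hy d := by
    rw [decompose_add, DirectSum.add_apply, AddMemClass.coe_add]
    exact add_mem (hx d) (hy d)
  smul_mem' r x hx d := by
    induction r using Decomposition.inductionOn 𝒜 with
    | zero => simp
    | add r s hr hs =>
      rw [add_smul, decompose_add, DirectSum.add_apply, AddMemClass.coe_add]
      exact add_mem hr hs
    | @homogeneous i a =>
      rw [coe_decompose_smul_of_left_mem 𝒜 ℳ a.2]
      rcases lt_or_ge i 0 with hi | hi
      · simp [eq_zero_of_mem_of_neg hsupp a.2 hi]
      · exact (W d).smul_mem _ (hW (by omega) (hx (d - i)))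

end GradedModule

section UniversalProperty

variable {A : Type u} [Ring A] {A₀ : Subring A} {V : Type u} [AddCommGroup V] [Module A₀ V]
  {E : Type u} [AddCommGroup E] [Module A E] {ι : V →ₗ[A₀] E}
  (hE : ∀ (N : Type u) [AddCommGroup N] [Module A N] (f : V →ₗ[A₀] N),
    ∃! F : E →ₗ[A] N, ∀ x, F (ι x) = f x)
include hE

theorem linearMap_ext_of_existsUnique {N : Type u} [AddCommGroup N] [Module A N]
    {F₁ F₂ : E →ₗ[A] N} (h : ∀ x, F₁ (ι x) = F₂ (ι x)) : F₁ = F₂ :=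
  (hE N ((F₂.restrictScalars A₀) ∘ₗ ι)).unique h fun _ => rfl

theorem span_range_eq_top_of_existsUnique : Submodule.span A (Set.range ι) = ⊤ := by
  have h := linearMap_ext_of_existsUnique hE (F₁ := (Submodule.span A (Set.range ι)).mkQ)
    (F₂ := 0) fun x => (Submodule.Quotient.mk_eq_zero _).mpr (Submodule.subset_span ⟨x, rfl⟩)
  rw [← Submodule.ker_mkQ (Submodule.span A (Set.range ι)), h, LinearMap.ker_zero]

end UniversalProperty

section Filtration

variable {A : Type u} [Ring A] {P : Type u} [AddCommGroup P] [Module A P]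
  {ℳ : ℤ → AddSubgroup P}

theorem mem_filtration_of_mem {ω lam : ℤ} (h : ω ≤ lam) {p : P} (hp : p ∈ ℳ ω) :
    p ∈ filtration (A := A) P ℳ lam :=
  Submodule.subset_span ⟨ω, h, hp⟩

theorem filtration_mono : Monotone (filtration (A := A) P ℳ) :=
  fun _ _ h => Submodule.span_mono fun _ ⟨ω, hω, hx⟩ => ⟨ω, hω.trans h, hx⟩

theorem filtration_eq_bot {d₀ lam : ℤ} (hd₀ : ∀ ω < d₀, ℳ ω = ⊥) (hlam : lam < d₀) :
    filtration (A := A) P ℳ lam = ⊥ := by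
  refine eq_bot_iff.mpr <| Submodule.span_le.mpr ?_
  rintro p ⟨ω, hω, hp⟩
  rw [hd₀ ω (by omega)] at hp
  exact (AddSubgroup.mem_bot.mp hp).symm ▸ zero_mem _

variable {𝒜 : ℤ → AddSubgroup A} [GradedRing 𝒜] [Decomposition ℳ] [SetLike.GradedSMul 𝒜 ℳ]
  (hsupp : ∀ n : ℤ, n < 0 → 𝒜 n = ⊥)
include hsupp

theorem posSMulSubmodule_le_componentwise :
    posSMulSubmodule 𝒜 P ≤ componentwise ℳ hsupp (fun d => filtration (A := A) P ℳ (d - 1))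
      fun _ _ h => filtration_mono (by omega) := by
  refine Submodule.span_le.mpr ?_
  rintro _ ⟨n, hn, a, ha, p, rfl⟩ d
  rw [coe_decompose_smul_of_left_mem 𝒜 ℳ ha]
  exact Submodule.smul_mem _ a (mem_filtration_of_mem (by omega) (decompose ℳ p (d - n)).2)

theorem mem_filtration_sub_one_of_mem_posSMulSubmodule {d : ℤ} {p : P} (hp : p ∈ ℳ d)
    (hp' : p ∈ posSMulSubmodule 𝒜 P) : p ∈ filtration (A := A) P ℳ (d - 1) := by
  simpa [decompose_of_mem_same ℳ hp] using
    posSMulSubmodule_le_componentwise (ℳ := ℳ) hsupp hp' d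

theorem sub_mem_filtration_of_mk_eq {d : ℤ} {p p' : P} (hp : p ∈ ℳ d) (hp' : p' ∈ ℳ d)
    (h : (Submodule.Quotient.mk p : P ⧸ posSMulSubmodule 𝒜 P) = Submodule.Quotient.mk p') :
    p - p' ∈ filtration (A := A) P ℳ (d - 1) :=
  mem_filtration_sub_one_of_mem_posSMulSubmodule hsupp (sub_mem hp hp')
    ((Submodule.Quotient.eq _).mp h)

theorem exists_forall_lt_eq_bot [Module.Finite A P] : ∃ d₀, ∀ ω < d₀, ℳ ω = ⊥ := by
  classical
  obtain ⟨s, hs⟩ := Module.Finite.fg_top (R := A) (M := P)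
  obtain ⟨d₀, hd₀⟩ := (s.biUnion fun p => (decompose ℳ p).support).bddBelow
  let W : ℤ → Submodule A P := fun d => if d < d₀ then ⊥ else ⊤
  have hW : Monotone W := fun i j hij => by
    by_cases hj : j < d₀
    · simp [W, hj, show i < d₀ by omega]
    · simp [W, hj]
  have htop : ⊤ ≤ componentwise ℳ hsupp W hW := by
    rw [← hs, Submodule.span_le]
    intro p hp d
    by_cases hd : d < d₀
    · have : d ∉ (decompose ℳ p).support := fun h =>
        absurd (hd₀ (Finset.mem_biUnion.mpr ⟨p, hp, h⟩)) (not_le.mpr hd)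
      simp [DFinsupp.notMem_support_iff.mp this]
    · simp [W, hd]
  refine ⟨d₀, fun ω hω => (AddSubgroup.eq_bot_iff_forall _).mpr fun p hp => ?_⟩
  simpa [W, hω, decompose_of_mem_same ℳ hp] using htop (Submodule.mem_top (x := p)) ω

end Filtration

section TSub

variable {A : Type u} [Ring A] {𝒜 : ℤ → AddSubgroup A} {A₀ : Subring A}
  {P : Type u} [AddCommGroup P] [Module A P] {ℳ : ℤ → AddSubgroup P}

theorem mk_mem_TSub {κ : ℤ} {p : P} (hp : p ∈ ℳ κ) :
    (Submodule.Quotient.mk p : P ⧸ posSMulSubmodule 𝒜 P) ∈ TSub 𝒜 A₀ P ℳ κ :=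
  Submodule.subset_span ⟨p, hp, rfl⟩

theorem TSub_eq_bot_of_eq_bot {κ : ℤ} (h : ℳ κ = ⊥) : TSub 𝒜 A₀ P ℳ κ = ⊥ := by
  simp [TSub, h]

variable (ℳ) in
def sectionSpan (g : (P ⧸ posSMulSubmodule 𝒜 P) →ₗ[A₀] P) (lam : ℤ) : Submodule A P :=
  Submodule.span A {p | ∃ κ ≤ lam, ∃ t : TSub 𝒜 A₀ P ℳ κ, g t = p}

theorem sectionSpan_mono (g : (P ⧸ posSMulSubmodule 𝒜 P) →ₗ[A₀] P) :
    Monotone (sectionSpan ℳ g) :=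
  fun _ _ h => Submodule.span_mono fun _ ⟨κ, hκ, t, ht⟩ => ⟨κ, hκ.trans h, t, ht⟩

end TSub

section BaseChange

variable {A : Type u} [Ring A] (𝒜 : ℤ → AddSubgroup A) (A₀ : Subring A)
  (P : Type u) [AddCommGroup P] [Module A P] (ℳ : ℤ → AddSubgroup P)

abbrev Gens : Type u := Σ κ : ℤ, TSub 𝒜 A₀ P ℳ κ

def baseChangeRel : Submodule A (Gens 𝒜 A₀ P ℳ →₀ A) :=
  Submodule.span A
    ({x | ∃ (κ : ℤ) (t t' : TSub 𝒜 A₀ P ℳ κ), x = Finsupp.single ⟨κ, t + t'⟩ 1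
        - Finsupp.single ⟨κ, t⟩ 1 - Finsupp.single ⟨κ, t'⟩ 1} ∪
      {x | ∃ (κ : ℤ) (t : TSub 𝒜 A₀ P ℳ κ) (a : A₀),
        x = Finsupp.single ⟨κ, a • t⟩ 1 - Finsupp.single ⟨κ, t⟩ (a : A)})

/-- `⨁ κ, T(P)_κ ⊗_{A₀} A(-κ)`, presented by generators and relations because Mathlib's tensor
product needs a commutative base ring. -/
abbrev GradedBaseChange : Type u := (Gens 𝒜 A₀ P ℳ →₀ A) ⧸ baseChangeRel 𝒜 A₀ P ℳ

local notation "Q" => GradedBaseChange 𝒜 A₀ P ℳ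

namespace GradedBaseChange

def of (κ : ℤ) : TSub 𝒜 A₀ P ℳ κ →ₗ[A₀] Q where
  toFun t := Submodule.Quotient.mk (Finsupp.single ⟨κ, t⟩ 1)
  map_add' t t' := by
    rw [← Submodule.Quotient.mk_add, Submodule.Quotient.eq]
    exact Submodule.subset_span (Or.inl ⟨κ, t, t', by abel⟩)
  map_smul' a t := by
    rw [RingHom.id_apply, Subring.smul_def, ← Submodule.Quotient.mk_smul, Finsupp.smul_single,
      smul_eq_mul, mul_one, Submodule.Quotient.eq]
    exact Submodule.subset_span (Or.inr ⟨κ, t, a, rfl⟩)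

theorem mk_single (κ : ℤ) (t : TSub 𝒜 A₀ P ℳ κ) (a : A) :
    (Submodule.Quotient.mk (Finsupp.single ⟨κ, t⟩ a) : Q) = a • of 𝒜 A₀ P ℳ κ t := by
  rw [of, LinearMap.coe_mk, AddHom.coe_mk, ← Submodule.Quotient.mk_smul, Finsupp.smul_single,
    smul_eq_mul, mul_one]

variable {𝒜 A₀ P ℳ}

def lift {N : Type u} [AddCommGroup N] [Module A N]
    (f : ∀ κ, TSub 𝒜 A₀ P ℳ κ →ₗ[A₀] N) : Q →ₗ[A] N :=
  (baseChangeRel 𝒜 A₀ P ℳ).liftQ (Finsupp.linearCombination A fun s => f s.1 s.2) <| by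
    rw [baseChangeRel, Submodule.span_le]
    rintro x (⟨κ, t, t', rfl⟩ | ⟨κ, t, a, rfl⟩) <;>
      simp [Finsupp.linearCombination_single, Subring.smul_def]

@[simp]
theorem lift_of {N : Type u} [AddCommGroup N] [Module A N]
    (f : ∀ κ, TSub 𝒜 A₀ P ℳ κ →ₗ[A₀] N) (κ : ℤ) (t : TSub 𝒜 A₀ P ℳ κ) :
    lift f (of 𝒜 A₀ P ℳ κ t) = f κ t := by
  simp [lift, of]

theorem induction_on {motive : Q → Prop} (zero : motive 0)
    (smul_of : ∀ (a : A) (κ : ℤ) (t : TSub 𝒜 A₀ P ℳ κ), motive (a • of 𝒜 A₀ P ℳ κ t))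
    (add : ∀ q q', motive q → motive q' → motive (q + q')) (q : Q) : motive q := by
  obtain ⟨x, rfl⟩ := Submodule.Quotient.mk_surjective _ q
  induction x using Finsupp.induction_linear with
  | zero => exact zero
  | add x y hx hy => exact add _ _ hx hy
  | single s a => rw [mk_single]; exact smul_of a s.1 s.2

def toModule (g : (P ⧸ posSMulSubmodule 𝒜 P) →ₗ[A₀] P) : Q →ₗ[A] P :=
  lift fun κ => g ∘ₗ (TSub 𝒜 A₀ P ℳ κ).subtype

@[simp]
theorem toModule_of (g : (P ⧸ posSMulSubmodule 𝒜 P) →ₗ[A₀] P) (κ : ℤ) (t : TSub 𝒜 A₀ P ℳ κ) :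
    toModule g (of 𝒜 A₀ P ℳ κ t) = g t :=
  lift_of _ κ t

theorem sectionSpan_le_range (g : (P ⧸ posSMulSubmodule 𝒜 P) →ₗ[A₀] P) (lam : ℤ) :
    sectionSpan ℳ g lam ≤ LinearMap.range (toModule (ℳ := ℳ) g) :=
  Submodule.span_le.mpr fun _ ⟨κ, _, t, ht⟩ => ⟨of 𝒜 A₀ P ℳ κ t, by rw [toModule_of, ht]⟩

variable [Decomposition ℳ]

variable (𝒜 A₀ ℳ) in
/-- The inverse of `T(toModule g)`, precomposed with `P → T(P)`. -/
def toReduction : P →+ Q ⧸ posSMulSubmodule 𝒜 Q :=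
  (DirectSum.toAddMonoid fun d => (posSMulSubmodule 𝒜 Q).mkQ.toAddMonoidHom.comp <|
    (of 𝒜 A₀ P ℳ d).toAddMonoidHom.comp <|
      ((posSMulSubmodule 𝒜 P).mkQ.toAddMonoidHom.comp (ℳ d).subtype).codRestrict _
        fun m => mk_mem_TSub m.2).comp
    (decomposeAddEquiv ℳ).toAddMonoidHom

theorem toReduction_of_mem {d : ℤ} {p : P} (hp : p ∈ ℳ d) :
    toReduction 𝒜 A₀ ℳ p = Submodule.Quotient.mk (of 𝒜 A₀ P ℳ d ⟨_, mk_mem_TSub hp⟩) := by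
  simp [toReduction, decompose_of_mem ℳ hp]
  rfl

end GradedBaseChange

end BaseChange

namespace GradedBaseChange

variable {A : Type u} [Ring A] {𝒜 : ℤ → AddSubgroup A} [GradedRing 𝒜] {A₀ : Subring A}
  {P : Type u} [AddCommGroup P] [Module A P] {ℳ : ℤ → AddSubgroup P}

local notation "Q" => GradedBaseChange 𝒜 A₀ P ℳ

variable (𝒜 A₀ P ℳ) in
def projFree (d : ℤ) : (Gens 𝒜 A₀ P ℳ →₀ A) →+ (Gens 𝒜 A₀ P ℳ →₀ A) :=
  Finsupp.liftAddHom fun s => (Finsupp.singleAddHom s).comp (GradedRing.proj 𝒜 (d - s.1))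

theorem projFree_single (d : ℤ) (s : Gens 𝒜 A₀ P ℳ) (a : A) :
    projFree 𝒜 A₀ P ℳ d (Finsupp.single s a) =
      Finsupp.single s (GradedRing.proj 𝒜 (d - s.1) a) :=
  Finsupp.liftAddHom_apply_single _ s a

theorem projFree_mem_baseChangeRel (hA₀ : (A₀ : Set A) = (𝒜 0 : Set A)) (d : ℤ)
    {x : Gens 𝒜 A₀ P ℳ →₀ A} (hx : x ∈ baseChangeRel 𝒜 A₀ P ℳ) :
    projFree 𝒜 A₀ P ℳ d x ∈ baseChangeRel 𝒜 A₀ P ℳ := by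
  induction hx using Submodule.closure_induction with
  | zero => simp
  | add x y _ _ hx hy => rw [map_add]; exact add_mem hx hy
  | smul_mem r x hx =>
    rcases hx with ⟨κ, t, t', rfl⟩ | ⟨κ, t, a, rfl⟩
    · convert (baseChangeRel 𝒜 A₀ P ℳ).smul_mem (decompose 𝒜 r (d - κ) : A)
        (Submodule.subset_span (Or.inl ⟨κ, t, t', rfl⟩)) using 1
      simp only [smul_sub, Finsupp.smul_single, smul_eq_mul, mul_one, map_sub, projFree_single,
        GradedRing.proj_apply]
    · have ha : (a : A) ∈ 𝒜 0 := by rw [← SetLike.mem_coe, ← hA₀]; exact a.2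
      convert (baseChangeRel 𝒜 A₀ P ℳ).smul_mem (decompose 𝒜 r (d - κ) : A)
        (Submodule.subset_span (Or.inr ⟨κ, t, a, rfl⟩)) using 1
      simp only [smul_sub, Finsupp.smul_single, smul_eq_mul, mul_one, map_sub, projFree_single,
        GradedRing.proj_apply, coe_decompose_mul_of_right_mem_zero 𝒜 ha]

theorem projFree_smul_of_mem {a : A} {i : ℤ} (ha : a ∈ 𝒜 i) (d : ℤ)
    (x : Gens 𝒜 A₀ P ℳ →₀ A) :
    projFree 𝒜 A₀ P ℳ d (a • x) = a • projFree 𝒜 A₀ P ℳ (d - i) x := by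
  induction x using Finsupp.induction_linear with
  | zero => simp
  | add x y hx hy => rw [smul_add, map_add, map_add, hx, hy, smul_add]
  | single s b =>
    rw [Finsupp.smul_single, projFree_single, projFree_single, Finsupp.smul_single, smul_eq_mul,
      smul_eq_mul, GradedRing.proj_apply, GradedRing.proj_apply,
      show d - s.1 = i + (d - i - s.1) by ring, coe_decompose_mul_add_of_left_mem 𝒜 ha]

theorem exists_sum_projFree (x : Gens 𝒜 A₀ P ℳ →₀ A) :
    ∃ S : Finset ℤ, (∀ d ∉ S, projFree 𝒜 A₀ P ℳ d x = 0) ∧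
      ∑ d ∈ S, projFree 𝒜 A₀ P ℳ d x = x := by
  classical
  induction x using Finsupp.induction_linear with
  | zero => exact ⟨∅, fun _ _ => map_zero _, by simp⟩
  | add x y hx hy =>
    obtain ⟨S, hS, hSx⟩ := hx
    obtain ⟨T, hT, hTy⟩ := hy
    refine ⟨S ∪ T, fun d hd => ?_, ?_⟩
    · simp only [Finset.mem_union, not_or] at hd
      rw [map_add, hS d hd.1, hT d hd.2, add_zero]
    · simp only [map_add, Finset.sum_add_distrib]
      rw [← Finset.sum_subset Finset.subset_union_left fun d _ hd => hS d hd,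
        ← Finset.sum_subset Finset.subset_union_right fun d _ hd => hT d hd, hSx, hTy]
  | single s a =>
    refine ⟨(decompose 𝒜 a).support.map (addRightEmbedding s.1), fun d hd => ?_, ?_⟩
    · rw [projFree_single, GradedRing.proj_apply, DFinsupp.notMem_support_iff.mp fun h => hd ?_,
        ZeroMemClass.coe_zero, Finsupp.single_zero]
      exact Finset.mem_map.mpr ⟨d - s.1, h, sub_add_cancel d s.1⟩
    · simp only [Finset.sum_map, addRightEmbedding, Function.Embedding.coeFn_mk, projFree_single,
        add_sub_cancel_right]
      rw [← Finsupp.single_finsetSum]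
      simp only [GradedRing.proj_apply, sum_support_decompose]

variable (𝒜 A₀ P ℳ) in
/-- The projection to degree `d`, where `a • of κ t` has degree `i + κ` for `a ∈ 𝒜 i`. -/
def proj (hA₀ : (A₀ : Set A) = (𝒜 0 : Set A)) (d : ℤ) : Q →+ Q :=
  QuotientAddGroup.lift (baseChangeRel 𝒜 A₀ P ℳ).toAddSubgroup
    ((baseChangeRel 𝒜 A₀ P ℳ).mkQ.toAddMonoidHom.comp (projFree 𝒜 A₀ P ℳ d)) fun _ hx => by
      simpa using projFree_mem_baseChangeRel hA₀ d hx

variable (hA₀ : (A₀ : Set A) = (𝒜 0 : Set A))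
include hA₀

theorem proj_mk (d : ℤ) (x : Gens 𝒜 A₀ P ℳ →₀ A) :
    proj 𝒜 A₀ P ℳ hA₀ d (Submodule.Quotient.mk x) =
      Submodule.Quotient.mk (projFree 𝒜 A₀ P ℳ d x) := rfl

theorem proj_of_of_ne {d κ : ℤ} (h : d ≠ κ) (t : TSub 𝒜 A₀ P ℳ κ) :
    proj 𝒜 A₀ P ℳ hA₀ d (of 𝒜 A₀ P ℳ κ t) = 0 := by
  rw [of, LinearMap.coe_mk, AddHom.coe_mk, proj_mk, projFree_single, GradedRing.proj_apply,
    decompose_of_mem_ne 𝒜 SetLike.GradedOne.one_mem (sub_ne_zero.mpr h).symm,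
    Finsupp.single_zero, Submodule.Quotient.mk_zero]

theorem proj_smul_of_mem {a : A} {i : ℤ} (ha : a ∈ 𝒜 i) (d : ℤ) (q : Q) :
    proj 𝒜 A₀ P ℳ hA₀ d (a • q) = a • proj 𝒜 A₀ P ℳ hA₀ (d - i) q := by
  obtain ⟨x, rfl⟩ := Submodule.Quotient.mk_surjective _ q
  rw [← Submodule.Quotient.mk_smul, proj_mk, proj_mk, projFree_smul_of_mem ha,
    Submodule.Quotient.mk_smul]

theorem eq_zero_of_forall_proj_eq_zero {q : Q} (h : ∀ d, proj 𝒜 A₀ P ℳ hA₀ d q = 0) :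
    q = 0 := by
  obtain ⟨x, rfl⟩ := Submodule.Quotient.mk_surjective _ q
  obtain ⟨S, -, hS⟩ := exists_sum_projFree x
  simp only [proj_mk, Submodule.Quotient.mk_eq_zero] at h ⊢
  rw [← hS]
  exact Submodule.sum_mem _ fun d _ => h d

variable (hsupp : ∀ n : ℤ, n < 0 → 𝒜 n = ⊥)

variable (𝒜 A₀ P ℳ) in
def degreeGE (m : ℤ) : Submodule A Q where
  carrier := {q | ∀ d < m, proj 𝒜 A₀ P ℳ hA₀ d q = 0}
  zero_mem' d _ := map_zero _
  add_mem' hq hq' d hd := by rw [map_add, hq d hd, hq' d hd, add_zero]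
  smul_mem' r q hq d hd := by
    induction r using Decomposition.inductionOn 𝒜 with
    | zero => rw [zero_smul, map_zero]
    | add r s hr hs => rw [add_smul, map_add, hr, hs, add_zero]
    | @homogeneous i a =>
      rw [proj_smul_of_mem hA₀ a.2]
      rcases lt_or_ge i 0 with hi | hi
      · rw [eq_zero_of_mem_of_neg hsupp a.2 hi, zero_smul]
      · rw [hq (d - i) (by omega), smul_zero]

include hsupp

theorem of_mem_degreeGE (κ : ℤ) (t : TSub 𝒜 A₀ P ℳ κ) :
    of 𝒜 A₀ P ℳ κ t ∈ degreeGE 𝒜 A₀ P ℳ hA₀ hsupp κ :=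
  fun _ hd => proj_of_of_ne hA₀ hd.ne t

theorem smul_mem_degreeGE {a : A} {i m : ℤ} (ha : a ∈ 𝒜 i) {q : Q}
    (hq : q ∈ degreeGE 𝒜 A₀ P ℳ hA₀ hsupp m) : a • q ∈ degreeGE 𝒜 A₀ P ℳ hA₀ hsupp (m + i) :=
    fun d hd => by
  rw [proj_smul_of_mem hA₀ ha, hq (d - i) (by omega), smul_zero]

theorem degreeGE_antitone : Antitone (degreeGE 𝒜 A₀ P ℳ hA₀ hsupp) :=
  fun _ _ h _ hq d hd => hq d (lt_of_lt_of_le hd h)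

theorem eq_zero_of_forall_mem_degreeGE {q : Q} (h : ∀ m, q ∈ degreeGE 𝒜 A₀ P ℳ hA₀ hsupp m) :
    q = 0 :=
  eq_zero_of_forall_proj_eq_zero hA₀ fun d => h (d + 1) d (lt_add_one d)

theorem degreeGE_eq_top {d₀ : ℤ} (hd₀ : ∀ κ < d₀, ℳ κ = ⊥) :
    degreeGE 𝒜 A₀ P ℳ hA₀ hsupp d₀ = ⊤ := by
  refine eq_top_iff.mpr fun q _ => ?_
  induction q using induction_on with
  | zero => exact zero_mem _
  | add q q' hq hq' => exact add_mem (hq trivial) (hq' trivial)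
  | smul_of a κ t =>
    rcases lt_or_ge κ d₀ with hκ | hκ
    · obtain rfl : t = 0 := Subtype.ext <| (Submodule.mem_bot A₀).mp <|
        TSub_eq_bot_of_eq_bot (𝒜 := 𝒜) (A₀ := A₀) (hd₀ κ hκ) ▸ t.2
      rw [map_zero, smul_zero]
      exact zero_mem _
    · exact Submodule.smul_mem _ a <|
        degreeGE_antitone hA₀ hsupp hκ (of_mem_degreeGE hA₀ hsupp κ t)

theorem posSMulSubmodule_le_comap_degreeGE {π : Q →ₗ[A] Q} {m : ℤ}
    (hπ : ∀ q, π q ∈ degreeGE 𝒜 A₀ P ℳ hA₀ hsupp m) :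
    posSMulSubmodule 𝒜 Q ≤ (degreeGE 𝒜 A₀ P ℳ hA₀ hsupp (m + 1)).comap π := by
  refine Submodule.span_le.mpr ?_
  rintro _ ⟨n, hn, a, ha, q, rfl⟩
  rw [SetLike.mem_coe, Submodule.mem_comap, map_smul]
  exact degreeGE_antitone hA₀ hsupp (by omega) (smul_mem_degreeGE hA₀ hsupp ha (hπ q))

end GradedBaseChange

section GradedSection

variable {A : Type u} [Ring A] {𝒜 : ℤ → AddSubgroup A} [GradedRing 𝒜] {A₀ : Subring A}
  {P : Type u} [AddCommGroup P] [Module A P] {ℳ : ℤ → AddSubgroup P}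
  [Decomposition ℳ] [SetLike.GradedSMul 𝒜 ℳ]
  (hA₀ : (A₀ : Set A) = (𝒜 0 : Set A)) (hsupp : ∀ n : ℤ, n < 0 → 𝒜 n = ⊥)
  {g : (P ⧸ posSMulSubmodule 𝒜 P) →ₗ[A₀] P} (hgsec : ∀ t, Submodule.Quotient.mk (g t) = t)
  (hggr : ∀ (n : ℤ) (t : P ⧸ posSMulSubmodule 𝒜 P), t ∈ TSub 𝒜 A₀ P ℳ n → g t ∈ ℳ n)

include hsupp hgsec hggr in
/-- Graded Nakayama: a homogeneous `p` of degree `m + 1` differs from `g [p]` by an element of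
`F^m P`. -/
theorem filtration_le_sectionSpan {d₀ : ℤ} (hd₀ : ∀ ω < d₀, ℳ ω = ⊥) (lam : ℤ) :
    filtration (A := A) P ℳ lam ≤ sectionSpan ℳ g lam := by
  induction lam using Int.inductionOn' (b := d₀ - 1) with
  | zero => simp [filtration_eq_bot hd₀ (show d₀ - 1 < d₀ by omega)]
  | pred m hm _ => simp [filtration_eq_bot hd₀ (show m - 1 < d₀ by omega)]
  | succ m _ ih =>
    refine Submodule.span_le.mpr ?_
    rintro p ⟨ω, hω, hp⟩
    rcases hω.lt_or_eq with hω | rfl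
    · exact sectionSpan_mono g (by omega) (ih (mem_filtration_of_mem (by omega) hp))
    · let t : TSub 𝒜 A₀ P ℳ (m + 1) := ⟨_, mk_mem_TSub hp⟩
      have hpt : p - g t ∈ filtration (A := A) P ℳ m := by
        simpa using sub_mem_filtration_of_mk_eq hsupp hp (hggr _ _ t.2) (hgsec t).symm
      rw [← sub_add_cancel p (g t)]
      exact add_mem (sectionSpan_mono g (by omega) (ih hpt))
        (Submodule.subset_span ⟨m + 1, le_rfl, t, rfl⟩)

namespace GradedBaseChange

local notation "Q" => GradedBaseChange 𝒜 A₀ P ℳ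

omit [GradedRing 𝒜] in
include hA₀ hsupp hgsec hggr in
theorem toReduction_smul_section {a : A} {i κ : ℤ} (ha : a ∈ 𝒜 i) (t : TSub 𝒜 A₀ P ℳ κ) :
    toReduction 𝒜 A₀ ℳ (a • g t) = Submodule.Quotient.mk (a • of 𝒜 A₀ P ℳ κ t) := by
  have hgt := hggr κ t t.2
  rcases lt_trichotomy i 0 with hi | rfl | hi
  · simp [eq_zero_of_mem_of_neg hsupp ha hi]
  · have ha₀ : a ∈ A₀ := by rw [← SetLike.mem_coe, hA₀]; exact ha
    have hmem : a • g t ∈ ℳ κ := by simpa using SetLike.GradedSMul.smul_mem ha hgt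
    have hat : (⟨_, mk_mem_TSub hmem⟩ : TSub 𝒜 A₀ P ℳ κ) = (⟨a, ha₀⟩ : A₀) • t :=
      Subtype.ext <| (Submodule.Quotient.mk_smul _ a (g t)).trans <| by rw [hgsec]; rfl
    rw [toReduction_of_mem hmem, hat, map_smul]
    rfl
  · have hmem : a • g t ∈ ℳ (i + κ) := SetLike.GradedSMul.smul_mem ha hgt
    have hzero : (⟨_, mk_mem_TSub hmem⟩ : TSub 𝒜 A₀ P ℳ (i + κ)) = 0 :=
      Subtype.ext <| (Submodule.Quotient.mk_eq_zero _).mpr <|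
        Submodule.subset_span ⟨i, hi, a, ha, g t, rfl⟩
    rw [toReduction_of_mem hmem, hzero, map_zero, Submodule.Quotient.mk_zero, eq_comm,
      Submodule.Quotient.mk_eq_zero]
    exact Submodule.subset_span ⟨i, hi, a, ha, _, rfl⟩

include hA₀ hsupp hgsec hggr in
theorem toReduction_toModule (q : Q) :
    toReduction 𝒜 A₀ ℳ (toModule g q) = Submodule.Quotient.mk q := by
  induction q using induction_on with
  | zero => simp
  | add q q' hq hq' => rw [map_add, map_add, hq, hq', Submodule.Quotient.mk_add]
  | smul_of a κ t =>
    rw [map_smul, toModule_of]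
    induction a using Decomposition.inductionOn 𝒜 with
    | zero => simp
    | add a b ha hb => rw [add_smul, add_smul, map_add, ha, hb, Submodule.Quotient.mk_add]
    | homogeneous a => exact toReduction_smul_section hA₀ hsupp hgsec hggr a.2 t

include hsupp hgsec hggr in
theorem toModule_surjective {d₀ : ℤ} (hd₀ : ∀ ω < d₀, ℳ ω = ⊥) :
    Function.Surjective (toModule (ℳ := ℳ) g) := by
  classical
  intro p
  rw [← LinearMap.mem_range, ← sum_support_decompose ℳ p]
  exact Submodule.sum_mem _ fun d _ => sectionSpan_le_range g d <|
    filtration_le_sectionSpan hsupp hgsec hggr hd₀ d <|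
      mem_filtration_of_mem le_rfl (decompose ℳ p d).2

include hA₀ hsupp hgsec hggr in
/-- The kernel `K` of `toModule g` is a direct summand with `K = K·A₊` (it dies in `T`), so it
lies in arbitrarily high degree. -/
theorem toModule_injective [Module.Finite A P] [Module.Projective A P] :
    Function.Injective (toModule (ℳ := ℳ) g) := by
  obtain ⟨d₀, hd₀⟩ := exists_forall_lt_eq_bot (ℳ := ℳ) hsupp
  obtain ⟨σ, hσ⟩ := Module.projective_lifting_property (toModule g) LinearMap.id
    (toModule_surjective hsupp hgsec hggr hd₀)
  let π : Q →ₗ[A] Q := LinearMap.id - σ ∘ₗ toModule g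
  have hπ q : toModule g (π q) = 0 := by
    simp [π, ← LinearMap.comp_apply (toModule g) σ, hσ]
  have hker : ∀ n : ℕ, ∀ q, toModule g q = 0 → q ∈ degreeGE 𝒜 A₀ P ℳ hA₀ hsupp (d₀ + n) := by
    intro n
    induction n with
    | zero => simp [degreeGE_eq_top hA₀ hsupp hd₀]
    | succ n ih =>
      intro q hq
      have hq' : π q = q := by simp [π, hq]
      rw [Nat.cast_succ, ← add_assoc, ← hq']
      exact posSMulSubmodule_le_comap_degreeGE hA₀ hsupp (fun q => ih _ (hπ q)) <|
        (Submodule.Quotient.mk_eq_zero _).mp <| by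
          rw [← toReduction_toModule hA₀ hsupp hgsec hggr, hq, map_zero]
  refine (injective_iff_map_eq_zero _).mpr fun q hq =>
    eq_zero_of_forall_mem_degreeGE hA₀ hsupp fun m => ?_
  exact degreeGE_antitone hA₀ hsupp (by omega : m ≤ d₀ + (m - d₀).toNat) (hker _ q hq)

end GradedBaseChange

open GradedBaseChange in
include hA₀ hsupp hgsec hggr in
/-- The retraction comes from the structure theorem `P ≅ ⨁ κ, T(P)_κ ⊗_{A₀} A(-κ)`: project onto
the summand `κ = k + 1`. -/
theorem exists_retraction [Module.Finite A P] [Module.Projective A P] (k : ℤ) {E : Type u}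
    [AddCommGroup E] [Module A E] (ι : TSub 𝒜 A₀ P ℳ (k + 1) →ₗ[A₀] E) :
    ∃ L : (P ⧸ filtration (A := A) P ℳ k) →ₗ[A] E,
      ∀ t : TSub 𝒜 A₀ P ℳ (k + 1), L (Submodule.Quotient.mk (g t)) = ι t := by
  obtain ⟨d₀, hd₀⟩ := exists_forall_lt_eq_bot (ℳ := ℳ) hsupp
  let e := LinearEquiv.ofBijective (toModule (ℳ := ℳ) g)
    ⟨toModule_injective hA₀ hsupp hgsec hggr, toModule_surjective hsupp hgsec hggr hd₀⟩
  let pr : GradedBaseChange 𝒜 A₀ P ℳ →ₗ[A] E := lift fun κ =>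
    if h : κ = k + 1 then ι ∘ₗ Submodule.inclusion (h ▸ le_rfl) else 0
  have hpr (κ : ℤ) (t : TSub 𝒜 A₀ P ℳ κ) : pr (e.symm (g t)) =
      if h : κ = k + 1 then ι (Submodule.inclusion (h ▸ le_rfl) t) else 0 := by
    rw [e.symm_apply_eq.mpr (toModule_of g κ t).symm, lift_of]
    split_ifs <;> rfl
  refine ⟨(filtration P ℳ k).liftQ (pr ∘ₗ e.symm.toLinearMap) ?_, fun t => ?_⟩
  · refine (filtration_le_sectionSpan hsupp hgsec hggr hd₀ k).trans (Submodule.span_le.mpr ?_)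
    rintro _ ⟨κ, hκ, t, rfl⟩
    simp [hpr, show κ ≠ k + 1 by omega]
  · simp [hpr]
    rfl

include hsupp hgsec hggr in
theorem range_eq_map_filtration {k : ℤ} {E : Type u} [AddCommGroup E] [Module A E]
    {ι : TSub 𝒜 A₀ P ℳ (k + 1) →ₗ[A₀] E} (hι : Submodule.span A (Set.range ι) = ⊤)
    {F : E →ₗ[A] P ⧸ filtration (A := A) P ℳ k}
    (hF : ∀ t : TSub 𝒜 A₀ P ℳ (k + 1), F (ι t) = Submodule.Quotient.mk (g t)) :
    LinearMap.range F = (filtration P ℳ (k + 1)).map (filtration P ℳ k).mkQ := by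
  refine le_antisymm ?_ ?_
  · rw [LinearMap.range_eq_map, ← hι, Submodule.map_span, Submodule.span_le]
    rintro _ ⟨_, ⟨t, rfl⟩, rfl⟩
    exact ⟨g t, mem_filtration_of_mem le_rfl (hggr _ _ t.2), (hF t).symm⟩
  · refine Submodule.map_le_iff_le_comap.mpr (Submodule.span_le.mpr ?_)
    rintro p ⟨ω, hω, hp⟩
    rw [SetLike.mem_coe, Submodule.mem_comap, Submodule.mkQ_apply]
    rcases hω.lt_or_eq with hω | rfl
    · rw [(Submodule.Quotient.mk_eq_zero _).mpr (mem_filtration_of_mem (by omega) hp)]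
      exact zero_mem _
    · let t : TSub 𝒜 A₀ P ℳ (k + 1) := ⟨_, mk_mem_TSub hp⟩
      refine ⟨ι t, (hF t).trans <| (Submodule.Quotient.eq _).mpr ?_⟩
      simpa using sub_mem_filtration_of_mk_eq hsupp (hggr _ _ t.2) hp (hgsec t)

end GradedSection

end GradedFiltration

end

open GradedFiltration

/-- Let `A` be an `ℕ`-graded ring, `P` a finitely generated `ℤ`-graded projective
`A`-module with filtration `F^λP`. For each `k`, the quotient `F^{k+1}P/F^kP` is
isomorphic to `T(P)_{k+1} ⊗_{A₀} A(−(k+1))` (encoded by a base change `E` of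
`T(P)_{k+1}`), via the map induced by any `A₀`-linear graded section `g` of
`P → T(P) = P/P·A₊`; moreover the isomorphism is natural in `P`, i.e. independent of the
choice of section: the maps `F, F₀` induced by two sections `g, g₀` coincide. -/
theorem filtration_quotient_iso (A : Type u) [Ring A] (𝒜 : ℤ → AddSubgroup A)
    [GradedRing 𝒜] (hsupp : ∀ n : ℤ, n < 0 → 𝒜 n = ⊥)
    (A₀ : Subring A) (hA₀ : (A₀ : Set A) = (𝒜 0 : Set A))
    (P : Type u) [AddCommGroup P] [Module A P] (ℳ : ℤ → AddSubgroup P)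
    [DirectSum.Decomposition ℳ] [SetLike.GradedSMul 𝒜 ℳ]
    [Module.Finite A P] [Module.Projective A P] (k : ℤ)
    (E : Type u) [AddCommGroup E] [Module A E]
    (ι : (TSub 𝒜 A₀ P ℳ (k + 1)) →ₗ[A₀] E)
    (hE : ∀ (N : Type u) [AddCommGroup N] [Module A N]
      (f : (TSub 𝒜 A₀ P ℳ (k + 1)) →ₗ[A₀] N),
      ∃! F : E →ₗ[A] N, ∀ x, F (ι x) = f x)
    (g g₀ : (P ⧸ posSMulSubmodule 𝒜 P) →ₗ[A₀] P)
    (hgsec : ∀ t, Submodule.Quotient.mk (g t) = t)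
    (hg₀sec : ∀ t, Submodule.Quotient.mk (g₀ t) = t)
    (hggr : ∀ (n : ℤ) (t : P ⧸ posSMulSubmodule 𝒜 P), t ∈ TSub 𝒜 A₀ P ℳ n → g t ∈ ℳ n)
    (hg₀gr : ∀ (n : ℤ) (t : P ⧸ posSMulSubmodule 𝒜 P), t ∈ TSub 𝒜 A₀ P ℳ n → g₀ t ∈ ℳ n)
    (F F₀ : E →ₗ[A] P ⧸ filtration P ℳ k)
    (hF : ∀ x : TSub 𝒜 A₀ P ℳ (k + 1), F (ι x) = Submodule.Quotient.mk (g (x : _)))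
    (hF₀ : ∀ x : TSub 𝒜 A₀ P ℳ (k + 1), F₀ (ι x) = Submodule.Quotient.mk (g₀ (x : _))) :
    F = F₀ ∧ Function.Injective F ∧
      LinearMap.range F = (filtration P ℳ (k + 1)).map (filtration P ℳ k).mkQ := by
  have hgg₀ (t : TSub 𝒜 A₀ P ℳ (k + 1)) :
      (Submodule.Quotient.mk (g t) : P ⧸ filtration (A := A) P ℳ k) =
        Submodule.Quotient.mk (g₀ t) :=
    (Submodule.Quotient.eq _).mpr <| by
      simpa using sub_mem_filtration_of_mk_eq hsupp (hggr _ _ t.2) (hg₀gr _ _ t.2)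
        ((hgsec t).trans (hg₀sec t).symm)
  obtain ⟨L, hL⟩ := exists_retraction hA₀ hsupp hgsec hggr k ι
  have hLF : L ∘ₗ F = LinearMap.id :=
    linearMap_ext_of_existsUnique hE fun t => by simp [hF, hL]
  exact ⟨linearMap_ext_of_existsUnique hE fun t => by rw [hF, hF₀, hgg₀],
    Function.LeftInverse.injective (g := L) (LinearMap.congr_fun hLF),
    range_eq_map_filtration hsupp hgsec hggr (span_range_eq_top_of_existsUnique hE) hF⟩
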